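/- arXiv:2303.05805 — 7 statements merged into one kernel-verified Lean document; each statement's English description precedes it below -/
import Mathlib

section
/- Let t01, t02, t03, t12, t13, t23 be the six edge tangent vectors of a non-degenerate tetrahedron in R^3 (i.e., t_{ij} = x_j - x_i for vertices x_0, x_1, x_2, x_3 in general position). Then the six rank-one symmetric matrices T_{ij} = t_{ij} t_{ij}^T form a basis of the 6-dimensional space of 3x3 real symmetric matrices. -/
/-!
Let `M` be the matrix with columns `x₁ - x₀, x₂ - x₀, x₃ - x₀`; affine independence makes
it invertible. It maps the vertices `0, e₁, e₂, e₃` of the standard tetrahedron to `xₖ - x₀`,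
hence its edge vectors to the `t_{ij}`, so `T_{ij} = M S_{ij} Mᵀ` where `S_{ij}` are the edge
tensors of the standard tetrahedron. Congruence `A ↦ M A Mᵀ` is a linear automorphism of the
matrix space that preserves symmetry in both directions, so it carries a basis of the symmetric
matrices to a basis. For the standard tetrahedron the tensors are `eₖeₖᵀ` and
`(e_j - e_i)(e_j - e_i)ᵀ`, which form a basis by direct inspection.
-/

open Matrix

/-- The submodule of symmetric 3×3 real matrices. -/
def sym3 : Submodule ℝ (Matrix (Fin 3) (Fin 3) ℝ) where
  carrier := {A | A.IsSymm}
  add_mem' := fun ha hb => ha.add hb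
  zero_mem' := by simp [Matrix.IsSymm]
  smul_mem' := fun c A hA => hA.smul c

namespace Matrix

variable {n R : Type*} [Fintype n] [DecidableEq n] [CommRing R]

def congruence : Matrix n n R →* Module.End R (Matrix n n R) where
  toFun M := LinearMap.mulLeft R M ∘ₗ LinearMap.mulRight R Mᵀ
  map_one' := by ext; simp
  map_mul' M N := by ext; simp [Matrix.mul_assoc]

@[simp]
lemma congruence_apply (M A : Matrix n n R) : congruence M A = M * A * Mᵀ := by
  simp [congruence, Matrix.mul_assoc]

lemma vecMulVec_mulVec_mulVec (M : Matrix n n R) (a b : n → R) :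
    vecMulVec (M *ᵥ a) (M *ᵥ b) = congruence M (vecMulVec a b) := by
  rw [congruence_apply, mul_vecMulVec, vecMulVec_mul, vecMul_transpose]

lemma transpose_congruence (M A : Matrix n n R) : (congruence M A)ᵀ = congruence M Aᵀ := by
  simp [Matrix.mul_assoc]

lemma congruence_bijective {M : Matrix n n R} (hM : IsUnit M) :
    Function.Bijective (congruence M) :=
  (Module.End.isUnit_iff _).1 (hM.map congruence)

lemma isSymm_congruence_iff {M A : Matrix n n R} (hM : IsUnit M) :
    (congruence M A).IsSymm ↔ A.IsSymm := by
  rw [IsSymm, IsSymm, transpose_congruence, (congruence_bijective hM).injective.eq_iff]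

end Matrix

lemma map_congruence_sym3 {M : Matrix (Fin 3) (Fin 3) ℝ} (hM : IsUnit M) :
    sym3.map (congruence M) = sym3 := by
  ext B
  constructor
  · rintro ⟨A, hA, rfl⟩
    exact (isSymm_congruence_iff hM).2 hA
  · intro hB
    obtain ⟨A, rfl⟩ := (congruence_bijective hM).surjective B
    exact ⟨A, (isSymm_congruence_iff hM).1 hB, rfl⟩

section Simplex

variable {R : Type*} [CommRing R] {m : ℕ}

def edgeTensor (x : Fin (m + 1) → Fin m → R)
    (p : {p : Fin (m + 1) × Fin (m + 1) // p.1 < p.2}) : Matrix (Fin m) (Fin m) R :=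
  vecMulVec (x p.1.2 - x p.1.1) (x p.1.2 - x p.1.1)

lemma isSymm_edgeTensor (x : Fin (m + 1) → Fin m → R)
    (p : {p : Fin (m + 1) × Fin (m + 1) // p.1 < p.2}) : (edgeTensor x p).IsSymm :=
  transpose_vecMulVec _ _

def stdVertex (k : Fin (m + 1)) (i : Fin m) : R := if k = i.succ then 1 else 0

@[simp]
lemma stdVertex_zero : (stdVertex 0 : Fin m → R) = 0 := by
  ext i
  simp [stdVertex, (Fin.succ_ne_zero i).symm]

@[simp]
lemma stdVertex_succ (j : Fin m) : (stdVertex j.succ : Fin m → R) = Pi.single j 1 := by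
  ext i
  simp [stdVertex, Pi.single_apply, eq_comm]

def edgeMatrix (x : Fin (m + 1) → Fin m → R) : Matrix (Fin m) (Fin m) R :=
  (of fun j => x j.succ - x 0)ᵀ

lemma edgeMatrix_mulVec_stdVertex (x : Fin (m + 1) → Fin m → R) (k : Fin (m + 1)) :
    edgeMatrix x *ᵥ stdVertex k = x k - x 0 := by
  cases k using Fin.cases with
  | zero => simp
  | succ j => simp [edgeMatrix]

lemma edgeTensor_eq_congruence (x : Fin (m + 1) → Fin m → R)
    (p : {p : Fin (m + 1) × Fin (m + 1) // p.1 < p.2}) :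
    edgeTensor x p = congruence (edgeMatrix x) (edgeTensor stdVertex p) := by
  rw [edgeTensor, edgeTensor, ← vecMulVec_mulVec_mulVec, mulVec_sub,
    edgeMatrix_mulVec_stdVertex, edgeMatrix_mulVec_stdVertex, sub_sub_sub_cancel_right]

lemma AffineIndependent.isUnit_edgeMatrix {K : Type*} [Field K] {x : Fin (m + 1) → Fin m → K}
    (hx : AffineIndependent K x) : IsUnit (edgeMatrix x) := by
  rw [edgeMatrix, isUnit_transpose, ← linearIndependent_rows_iff_isUnit]
  refine (linearIndependent_equiv' (finSuccAboveEquiv 0) ?_).2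
    ((affineIndependent_iff_linearIndependent_vsub K x 0).1 hx)
  ext j
  simp [vsub_eq_sub, finSuccAboveEquiv_apply]

end Simplex

noncomputable def tetrahedronEdges : Fin 6 ≃ {p : Fin 4 × Fin 4 // p.1 < p.2} :=
  Equiv.ofBijective ![⟨(0, 1), by decide⟩, ⟨(0, 2), by decide⟩, ⟨(0, 3), by decide⟩,
    ⟨(1, 2), by decide⟩, ⟨(1, 3), by decide⟩, ⟨(2, 3), by decide⟩] (by decide)

lemma linearIndependent_edgeTensor_stdVertex {R : Type*} [CommRing R] :
    LinearIndependent R (edgeTensor (stdVertex : Fin 4 → Fin 3 → R)) := by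
  rw [← linearIndependent_equiv tetrahedronEdges, Fintype.linearIndependent_iff]
  intro c hc
  have h (i j : Fin 3) :
      (∑ k, c k • edgeTensor (stdVertex : Fin 4 → Fin 3 → R) (tetrahedronEdges k)) i j = 0 :=
    congrFun (congrFun hc i) j
  have h01 : c 3 = 0 := by
    simpa [Fin.sum_univ_six, tetrahedronEdges, edgeTensor, stdVertex, vecMulVec_apply, Fin.ext_iff]
      using h 0 1
  have h02 : c 4 = 0 := by
    simpa [Fin.sum_univ_six, tetrahedronEdges, edgeTensor, stdVertex, vecMulVec_apply, Fin.ext_iff]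
      using h 0 2
  have h12 : c 5 = 0 := by
    simpa [Fin.sum_univ_six, tetrahedronEdges, edgeTensor, stdVertex, vecMulVec_apply, Fin.ext_iff]
      using h 1 2
  have h00 : c 0 = 0 := by
    simpa [Fin.sum_univ_six, tetrahedronEdges, edgeTensor, stdVertex, vecMulVec_apply, Fin.ext_iff,
      h01, h02] using h 0 0
  have h11 : c 1 = 0 := by
    simpa [Fin.sum_univ_six, tetrahedronEdges, edgeTensor, stdVertex, vecMulVec_apply, Fin.ext_iff,
      h01, h12] using h 1 1
  have h22 : c 2 = 0 := by
    simpa [Fin.sum_univ_six, tetrahedronEdges, edgeTensor, stdVertex, vecMulVec_apply, Fin.ext_iff,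
      h02, h12] using h 2 2
  intro i
  fin_cases i <;> assumption

lemma span_edgeTensor_stdVertex :
    Submodule.span ℝ (Set.range (edgeTensor (stdVertex : Fin 4 → Fin 3 → ℝ))) = sym3 := by
  refine le_antisymm (Submodule.span_le.2 ?_) fun A hA => ?_
  · rintro _ ⟨p, rfl⟩
    exact isSymm_edgeTensor _ p
  rw [← EquivLike.range_comp _ tetrahedronEdges, Submodule.mem_span_range_iff_exists_fun]
  -- off-diagonal entries give the coefficients of the `(e_j - e_i)(e_j - e_i)ᵀ`,
  -- row sums those of the `eₖeₖᵀ`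
  refine ⟨![A 0 0 + A 0 1 + A 0 2, A 1 1 + A 0 1 + A 1 2, A 2 2 + A 0 2 + A 1 2,
    -A 0 1, -A 0 2, -A 1 2], ?_⟩
  ext i j
  fin_cases i <;> fin_cases j <;>
    simp [Fin.sum_univ_six, tetrahedronEdges, edgeTensor, stdVertex, vecMulVec_apply,
      Fin.ext_iff] <;>
    first | ring | exact hA.apply _ _

/-- The six rank-one tensors `T_{ij} = t_{ij} t_{ij}ᵀ` built from the edge tangent
vectors of a non-degenerate tetrahedron form a basis of the space of symmetric matrices. -/
theorem stmt0 (x : Fin 4 → Fin 3 → ℝ) (hx : AffineIndependent ℝ x)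
    (T : {p : Fin 4 × Fin 4 // p.1 < p.2} → Matrix (Fin 3) (Fin 3) ℝ)
    (hT : ∀ p, T p = vecMulVec (x p.1.2 - x p.1.1) (x p.1.2 - x p.1.1)) :
    LinearIndependent ℝ T ∧ Submodule.span ℝ (Set.range T) = sym3 := by
  have hM : IsUnit (edgeMatrix x) := hx.isUnit_edgeMatrix
  have hT_eq : T = congruence (edgeMatrix x) ∘ edgeTensor stdVertex :=
    funext fun p => (hT p).trans (edgeTensor_eq_congruence x p :)
  refine ⟨?_, ?_⟩
  · rw [hT_eq]
    exact (linearIndependent_edgeTensor_stdVertex (R := ℝ)).map' _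
      (LinearMap.ker_eq_bot.2 (congruence_bijective hM).injective)
  · rw [hT_eq, Set.range_comp, Submodule.span_image, span_edgeTensor_stdVertex,
      map_congruence_sym3 hM]
end

section
/- With the setup of the previous lemma: write l1 = c n2 + a t2 and l2 = c n1 + b t1 (normalizing so that n1, n2, t1, t2 are unit vectors and c = l1^T n2 = l2^T n1). If T = A n1 n1^T + B t1 t1^T + C(n1 t1^T + t1 n1^T) satisfies T n1 = l1 and T n2 = l2, then A = c cos θ + a sin θ, C = -c sin θ + a cos θ, and B = -b/sin θ - c cos θ + a cos^2 θ / sin θ, and consequently A^2 + B^2 + 2C^2 = a^2 + b^2 + c^2 + (c - cot θ (a - b))^2. -/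
/-!
Both `n1` and `n2 = cos θ n1 - sin θ t1` lie in the plane where `T` acts as the symmetric
matrix `[[A, C], [C, B]]` in the orthonormal basis `(n1, t1)`, so reading `T n1 = l1` and
`T n2 = l2` in that basis determines `A`, `C`, and then `B` (dividing by `sin θ ≠ 0`).
For the norm identity, `A² + C² = |T n1|² = |l1|² = a² + c²`, while
`B² + C² = |T t1|²` with `T t1 = (cos θ l1 - l2) / sin θ`, whose squared length is
`b² + (c - cot θ (a - b))²`.
-/

open Matrix

section OrthonormalPair

variable {ι R : Type*} [Fintype ι] [CommRing R] {n t : ι → R}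

theorem mulVec_symmTensor_smul_add_smul (hn : n ⬝ᵥ n = 1) (ht : t ⬝ᵥ t = 1)
    (hnt : n ⬝ᵥ t = 0) (A B C x y : R) :
    (A • vecMulVec n n + B • vecMulVec t t + C • (vecMulVec n t + vecMulVec t n)) *ᵥ
        (x • n + y • t) = (A * x + C * y) • n + (C * x + B * y) • t := by
  have htn : t ⬝ᵥ n = 0 := by rwa [dotProduct_comm]
  simp only [add_mulVec, smul_mulVec, vecMulVec_mulVec, op_smul_eq_smul, dotProduct_add,
    dotProduct_smul, hn, ht, hnt, htn, smul_eq_mul]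
  module

theorem coeffs_eq_of_smul_add_smul_eq (hn : n ⬝ᵥ n = 1) (ht : t ⬝ᵥ t = 1)
    (hnt : n ⬝ᵥ t = 0) {p q r s : R} (h : p • n + q • t = r • n + s • t) :
    p = r ∧ q = s := by
  have htn : t ⬝ᵥ n = 0 := by rwa [dotProduct_comm]
  have hn' := congrArg (n ⬝ᵥ ·) h
  have ht' := congrArg (t ⬝ᵥ ·) h
  simp only [dotProduct_add, dotProduct_smul, hn, ht, hnt, htn, smul_eq_mul, mul_one,
    mul_zero, add_zero, zero_add] at hn' ht'
  exact ⟨hn', ht'⟩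

end OrthonormalPair

theorem sq_add_sq_add_two_mul_sq_of_coeffs {s k a b c A B C : ℝ} (hs : s ≠ 0)
    (hsk : s ^ 2 + k ^ 2 = 1) (hA : A = c * k + a * s) (hC : C = -c * s + a * k)
    (hB : B = -b / s - c * k + a * k ^ 2 / s) :
    A ^ 2 + B ^ 2 + 2 * C ^ 2 = a ^ 2 + b ^ 2 + c ^ 2 + (c - k / s * (a - b)) ^ 2 := by
  have hAC : A ^ 2 + C ^ 2 = a ^ 2 + c ^ 2 := by
    rw [hA, hC]
    linear_combination (a ^ 2 + c ^ 2) * hsk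
  have hBC : B ^ 2 + C ^ 2 = b ^ 2 + (c - k / s * (a - b)) ^ 2 := by
    rw [hB, hC]
    field_simp
    linear_combination (c ^ 2 * s ^ 2 + a ^ 2 * k ^ 2 - 2 * a * c * k * s - b ^ 2) * hsk
  linear_combination hAC + hBC

/-- Coefficient identities for the reconstructed symmetric tensor
`T = A n1n1ᵀ + B t1t1ᵀ + C(n1t1ᵀ + t1n1ᵀ)` with `Tn1 = c n2 + a t2`,
`Tn2 = c n1 + b t1`. -/
theorem stmt4 (θ a b c : ℝ) (hθ : θ ∈ Set.Ioo 0 Real.pi)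
    (n1 t1 : Fin 3 → ℝ) (hn1 : n1 ⬝ᵥ n1 = 1) (ht1 : t1 ⬝ᵥ t1 = 1)
    (ho : n1 ⬝ᵥ t1 = 0)
    (n2 t2 : Fin 3 → ℝ)
    (hn2 : n2 = Real.cos θ • n1 - Real.sin θ • t1)
    (ht2 : t2 = Real.sin θ • n1 + Real.cos θ • t1)
    (A B C : ℝ) (T : Matrix (Fin 3) (Fin 3) ℝ)
    (hT : T = A • vecMulVec n1 n1 + B • vecMulVec t1 t1
        + C • (vecMulVec n1 t1 + vecMulVec t1 n1))
    (h1 : T *ᵥ n1 = c • n2 + a • t2) (h2 : T *ᵥ n2 = c • n1 + b • t1) :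
    A = c * Real.cos θ + a * Real.sin θ ∧
    C = -c * Real.sin θ + a * Real.cos θ ∧
    B = -b / Real.sin θ - c * Real.cos θ + a * Real.cos θ ^ 2 / Real.sin θ ∧
    A ^ 2 + B ^ 2 + 2 * C ^ 2
      = a ^ 2 + b ^ 2 + c ^ 2 + (c - (Real.cos θ / Real.sin θ) * (a - b)) ^ 2 := by
  set s := Real.sin θ
  set k := Real.cos θ
  have hs : s ≠ 0 := (Real.sin_pos_of_pos_of_lt_pi hθ.1 hθ.2).ne'
  have hn1' : n1 = (1 : ℝ) • n1 + (0 : ℝ) • t1 := by simp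
  have hn2' : n2 = k • n1 + (-s) • t1 := by rw [hn2, neg_smul, sub_eq_add_neg]
  have e1 : (A * 1 + C * 0) • n1 + (C * 1 + B * 0) • t1 =
      (c * k + a * s) • n1 + (-c * s + a * k) • t1 := by
    rw [← mulVec_symmTensor_smul_add_smul hn1 ht1 ho, ← hT, ← hn1', h1, hn2, ht2]
    module
  have e2 : (A * k + C * -s) • n1 + (C * k + B * -s) • t1 = c • n1 + b • t1 := by
    rw [← mulVec_symmTensor_smul_add_smul hn1 ht1 ho, ← hT, ← hn2', h2]
  obtain ⟨hA₁, hC₁⟩ := coeffs_eq_of_smul_add_smul_eq hn1 ht1 ho e1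
  obtain ⟨-, hb⟩ := coeffs_eq_of_smul_add_smul_eq hn1 ht1 ho e2
  have hA : A = c * k + a * s := by linarith
  have hC : C = -c * s + a * k := by linarith
  have hB : B = -b / s - c * k + a * k ^ 2 / s := by
    field_simp
    linear_combination -hb + k * hC
  exact ⟨hA, hC, hB, sq_add_sq_add_two_mul_sq_of_coeffs hs (Real.sin_sq_add_cos_sq θ) hA hC hB⟩
end

section
/- For real numbers a, b, c and θ with sin θ ≠ 0: a^2 + b^2 + c^2 + (c - cot θ (a - b))^2 ≤ (3/2 + 2 cot^2 θ)(a^2 + b^2 + 2c^2). -/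
theorem sq_add_sq_add_sq_add_sq_sub_mul_le (a b c t : ℝ) :
    a ^ 2 + b ^ 2 + c ^ 2 + (c - t * (a - b)) ^ 2
      ≤ (3 / 2 + 2 * t ^ 2) * (a ^ 2 + b ^ 2 + 2 * c ^ 2) := by
  have sos : (3 / 2 + 2 * t ^ 2) * (a ^ 2 + b ^ 2 + 2 * c ^ 2)
      - (a ^ 2 + b ^ 2 + c ^ 2 + (c - t * (a - b)) ^ 2)
      = (a + b) ^ 2 / 4 + (t * (a + b)) ^ 2 + c ^ 2 + (2 * t * c + (a - b) / 2) ^ 2 := by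
    ring
  rw [← sub_nonneg, sos]
  positivity

theorem stmt5_general (a b c θ : ℝ) :
    a ^ 2 + b ^ 2 + c ^ 2 + (c - (Real.cos θ / Real.sin θ) * (a - b)) ^ 2
      ≤ (3 / 2 + 2 * (Real.cos θ / Real.sin θ) ^ 2) * (a ^ 2 + b ^ 2 + 2 * c ^ 2) :=
  sq_add_sq_add_sq_add_sq_sub_mul_le a b c _

/-- The key scalar inequality:
`a² + b² + c² + (c - cot θ (a - b))² ≤ (3/2 + 2 cot² θ)(a² + b² + 2c²)`. -/
theorem stmt5 (a b c θ : ℝ) (h : Real.sin θ ≠ 0) :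
    a ^ 2 + b ^ 2 + c ^ 2 + (c - (Real.cos θ / Real.sin θ) * (a - b)) ^ 2
      ≤ (3 / 2 + 2 * (Real.cos θ / Real.sin θ) ^ 2) * (a ^ 2 + b ^ 2 + 2 * c ^ 2) :=
  stmt5_general a b c θ
end

section
/- Let m ≥ 3 and let θ_1, ..., θ_m ∈ (0, π) be dihedral angles with Σ θ_j = 2π, and let n_1, ..., n_m, n_{m+1} = n_1 be unit normals of faces arranged cyclically around a common edge, with t_j ⟂ n_j in-plane tangents, satisfying n_{j+1} = cos θ_j n_j - sin θ_j t_j. Suppose T is a family of symmetric 3x3 matrices T_1, ..., T_m (one per sector, with T_{m+1} = T_1) such that T_j n_j = T_{j-1} n_j for all j (normal continuity across interior faces). Then if m is even, Σ_{j=1}^{m} (-1)^j (cot θ_{j-1} + cot θ_j) (n_j^T T_j n_j) = 0 (indices modulo m). -/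
/-!
Write `a_j = n_jᵀ T_j n_j` and `c_j = t_jᵀ T_j n_j`. Normal continuity lets one evaluate
`a_{j+1}` and `c_{j+1}` with `T_j`, and expanding in the frame `(n_j, t_j)` gives
`cot θ_j (a_j - a_{j+1}) = c_j + c_{j+1}`. Since `m` is even, the sign `(-1)^j` is well defined on
`ℤ/m` and flips under `j ↦ j + 1`, so summation by parts turns the alternating sum into
`∑ (-1)^j cot θ_j (a_j - a_{j+1}) = ∑ (-1)^j (c_j + c_{j+1})`, which cancels cyclically.
-/

open Matrix

section Rotation

variable {V : Type*} [AddCommGroup V] [Module ℝ V]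

theorem tangent_eq_of_rotate {θ : ℝ} (hs : Real.sin θ ≠ 0) {n t n' t' : V}
    (hn' : n' = Real.cos θ • n - Real.sin θ • t)
    (hn : n = Real.cos θ • n' + Real.sin θ • t') :
    t' = Real.sin θ • n + Real.cos θ • t := by
  apply smul_right_injective V hs
  have h := Real.sin_sq_add_cos_sq θ
  linear_combination (norm := module) -hn - Real.cos θ • hn' - h • n

theorem cot_mul_sub_eq_of_rotate (B : LinearMap.BilinForm ℝ V) (hB : B.IsSymm) {θ : ℝ}
    (hs : Real.sin θ ≠ 0) {n t n' t' : V}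
    (hn' : n' = Real.cos θ • n - Real.sin θ • t)
    (hn : n = Real.cos θ • n' + Real.sin θ • t') :
    Real.cos θ / Real.sin θ * (B n n - B n' n') = B t n + B t' n' := by
  rw [tangent_eq_of_rotate hs hn' hn, hn']
  simp only [map_add, map_sub, map_smul, LinearMap.add_apply, LinearMap.sub_apply,
    LinearMap.smul_apply, smul_eq_mul, hB.eq n t]
  field_simp
  linear_combination (B t n * Real.sin θ - B n n * Real.cos θ) * Real.sin_sq_add_cos_sq θ

end Rotation

namespace Fin

variable {m : ℕ} [NeZero m] {R : Type*} [CommRing R]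

theorem neg_one_pow_val_add_one (hm : Even m) (j : Fin m) :
    (-1 : R) ^ ((j + 1 : Fin m) : ℕ) = -(-1) ^ (j : ℕ) := by
  obtain ⟨k, rfl⟩ : ∃ k, m = k + 1 := ⟨m - 1, by have := NeZero.ne m; omega⟩
  rcases eq_or_ne j (last k) with rfl | hj
  · have hk : Odd k := by rcases hm with ⟨r, hr⟩; exact ⟨r - 1, by omega⟩
    simp [hk.neg_one_pow]
  · rw [val_add_one_of_lt (lt_last_iff_ne_last.mpr hj), pow_succ, mul_neg_one]

theorem sum_neg_one_pow_mul_comp_add_one (hm : Even m) (f : Fin m → R) :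
    ∑ j : Fin m, (-1 : R) ^ (j : ℕ) * f (j + 1) = -∑ j : Fin m, (-1 : R) ^ (j : ℕ) * f j := by
  have hshift : ∑ j : Fin m, (-1 : R) ^ ((j + 1 : Fin m) : ℕ) * f (j + 1) =
      ∑ j : Fin m, (-1 : R) ^ (j : ℕ) * f j :=
    Fintype.sum_equiv (Equiv.addRight 1) _ _ fun _ => rfl
  simp only [neg_one_pow_val_add_one hm, neg_mul, Finset.sum_neg_distrib] at hshift
  rw [← hshift, neg_neg]

theorem sum_neg_one_pow_mul_add_comp_add_one (hm : Even m) (f : Fin m → R) :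
    ∑ j : Fin m, (-1 : R) ^ (j : ℕ) * (f j + f (j + 1)) = 0 := by
  simp only [mul_add, Finset.sum_add_distrib, sum_neg_one_pow_mul_comp_add_one hm, add_neg_cancel]

theorem sum_neg_one_pow_by_parts (hm : Even m) (u a : Fin m → R) :
    ∑ j : Fin m, (-1 : R) ^ (j : ℕ) * (u (j - 1) + u j) * a j =
      ∑ j : Fin m, (-1 : R) ^ (j : ℕ) * u j * (a j - a (j + 1)) := by
  have hshift := sum_neg_one_pow_mul_comp_add_one hm fun j => u (j - 1) * a j
  simp only [add_sub_cancel_right] at hshift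
  simp only [add_mul, mul_add, mul_sub, mul_assoc, Finset.sum_add_distrib, Finset.sum_sub_distrib]
  linear_combination hshift

end Fin

theorem stmt6_general (m : ℕ) [NeZero m] (hme : Even m)
    (θ : Fin m → ℝ) (hθ : ∀ j, θ j ∈ Set.Ioo 0 Real.pi)
    (n t : Fin m → Fin 3 → ℝ)
    (hrot1 : ∀ j, n (j + 1) = Real.cos (θ j) • n j - Real.sin (θ j) • t j)
    (hrot2 : ∀ j, n j = Real.cos (θ j) • n (j + 1) + Real.sin (θ j) • t (j + 1))
    (T : Fin m → Matrix (Fin 3) (Fin 3) ℝ)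
    (hTsym : ∀ j, (T j).IsSymm)
    (hTcont : ∀ j, T j *ᵥ n (j + 1) = T (j + 1) *ᵥ n (j + 1)) :
    ∑ j : Fin m, (-1 : ℝ) ^ (j : ℕ) *
        (Real.cos (θ (j - 1)) / Real.sin (θ (j - 1)) + Real.cos (θ j) / Real.sin (θ j)) *
        (n j ⬝ᵥ (T j *ᵥ n j)) = 0 := by
  have key : ∀ j, Real.cos (θ j) / Real.sin (θ j) *
      (n j ⬝ᵥ (T j *ᵥ n j) - n (j + 1) ⬝ᵥ (T (j + 1) *ᵥ n (j + 1))) =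
        t j ⬝ᵥ (T j *ᵥ n j) + t (j + 1) ⬝ᵥ (T (j + 1) *ᵥ n (j + 1)) := by
    intro j
    have hsin : Real.sin (θ j) ≠ 0 := (Real.sin_pos_of_pos_of_lt_pi (hθ j).1 (hθ j).2).ne'
    rw [← hTcont j]
    simpa only [Matrix.toBilin'_apply'] using cot_mul_sub_eq_of_rotate _
      (Matrix.isSymm_toBilin'_iff_isSymm.mpr (hTsym j)) hsin (hrot1 j) (hrot2 j)
  rw [Fin.sum_neg_one_pow_by_parts hme (fun j => Real.cos (θ j) / Real.sin (θ j))]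
  simp only [mul_assoc, key]
  exact Fin.sum_neg_one_pow_mul_add_comp_add_one hme fun j => t j ⬝ᵥ (T j *ᵥ n j)

/-- Even-parity constraint: for an even number `m` of sectors around an interior edge,
with normal-continuous piecewise-constant symmetric tensors `T_j`, the alternating sum
`Σ_j (-1)^j (cot θ_{j-1} + cot θ_j) n_jᵀ T_j n_j` vanishes (indices mod `m`). -/
theorem stmt6 (m : ℕ) [NeZero m] (hm : 3 ≤ m) (hme : Even m)
    (θ : Fin m → ℝ) (hθ : ∀ j, θ j ∈ Set.Ioo 0 Real.pi)
    (hsum : ∑ j, θ j = 2 * Real.pi)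
    (n t : Fin m → Fin 3 → ℝ)
    (hn : ∀ j, n j ⬝ᵥ n j = 1) (htj : ∀ j, t j ⬝ᵥ t j = 1)
    (hnt : ∀ j, n j ⬝ᵥ t j = 0)
    (hrot1 : ∀ j, n (j + 1) = Real.cos (θ j) • n j - Real.sin (θ j) • t j)
    (hrot2 : ∀ j, n j = Real.cos (θ j) • n (j + 1) + Real.sin (θ j) • t (j + 1))
    (T : Fin m → Matrix (Fin 3) (Fin 3) ℝ)
    (hTsym : ∀ j, (T j).IsSymm)
    (hTcont : ∀ j, T j *ᵥ n (j + 1) = T (j + 1) *ᵥ n (j + 1)) :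
    ∑ j : Fin m, (-1 : ℝ) ^ (j : ℕ) *
        (Real.cos (θ (j - 1)) / Real.sin (θ (j - 1)) + Real.cos (θ j) / Real.sin (θ j)) *
        (n j ⬝ᵥ (T j *ᵥ n j)) = 0 :=
  stmt6_general m hme θ hθ n t hrot1 hrot2 T hTsym hTcont
end

section
/- Let m ≥ 3 be odd, and let θ_1, ..., θ_m ∈ (0, π) be the dihedral angles of a patch of m sectors around an interior edge, with unit face normals n_1, ..., n_m and tangents t_j as above. Then there exists a piecewise-constant symmetric tensor field T = (T_1, ..., T_m) with normal continuity across all interior faces (T_j n_{j+1} = T_{j+1} n_{j+1}, cyclically) such that n_1^T T n_1 = 1 and n_j^T T n_j = 0 for j = 2, ..., m. In fact one can take T with T n_1 = n_1 + α_1 t_1 and T n_j = α_j t_j where α_1 = (cot θ_1 - cot θ_m)/2, α_2 = (cot θ_1 + cot θ_m)/2, and α_j = (-1)^j α_2 for j ≥ 2. -/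
/-!
Write each `T j` in the orthonormal frame `(n j, t j)` as
`p • n nᵀ + q • (n tᵀ + t nᵀ) + r • t tᵀ`, so that `T j *ᵥ n j = p j • n j + q j • t j`.
Since `n (j + 1)` is `n j` rotated by `θ j`, normal continuity across the face `F (j + 1)` consists
of two scalar equations: the `t j`-component is solved by choosing `r j` (as `sin θ j ≠ 0`), and the
`n j`-component becomes `q j + q (j + 1) = (p j - p (j + 1)) * cot (θ j)`. For `p = δ₀` and
`q j = (-1) ^ (j + 1) * α₂` (`j ≠ 0`) the alternating signs solve this for `0 < j < m - 1`, and
`α₁ = q 0`, `α₂` solve the two equations at `j = 0` and `j = m - 1`; the latter has this form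
because `m` is odd.
-/

open Matrix

section Rotation

variable {K V : Type*} [Field K] [AddCommGroup V] [Module K V]

theorem tangent_eq_of_rotation {c s : K} {n t n' t' : V} (hs : s ≠ 0) (hcs : s ^ 2 + c ^ 2 = 1)
    (h₁ : n' = c • n - s • t) (h₂ : n = c • n' + s • t') : t' = s • n + c • t := by
  apply smul_right_injective V hs
  rw [h₁] at h₂
  linear_combination (norm := module) -h₂ - hcs • n

end Rotation

section FrameTensor

variable {ι R : Type*}

def frameTensor [CommRing R] (p q r : R) (n t : ι → R) : Matrix ι ι R :=
  p • vecMulVec n n + q • (vecMulVec n t + vecMulVec t n) + r • vecMulVec t t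

theorem frameTensor_isSymm [CommRing R] (p q r : R) (n t : ι → R) :
    (frameTensor p q r n t).IsSymm := by
  simp only [IsSymm, frameTensor, transpose_add, transpose_smul, transpose_vecMulVec,
    add_comm (vecMulVec t n)]

variable [Fintype ι]

theorem frameTensor_mulVec [CommRing R] (p q r : R) (n t x : ι → R) :
    frameTensor p q r n t *ᵥ x =
      (p * (n ⬝ᵥ x) + q * (t ⬝ᵥ x)) • n + (q * (n ⬝ᵥ x) + r * (t ⬝ᵥ x)) • t := by
  simp only [frameTensor, add_mulVec, smul_mulVec, vecMulVec_mulVec, op_smul_eq_smul]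
  module

theorem frameTensor_mulVec_self [CommRing R] {n t : ι → R} (p q r : R) (hn : n ⬝ᵥ n = 1)
    (hnt : n ⬝ᵥ t = 0) : frameTensor p q r n t *ᵥ n = p • n + q • t := by
  rw [frameTensor_mulVec, hn, dotProduct_comm, hnt]
  module

theorem dotProduct_frameTensor_mulVec_self [CommRing R] {n t : ι → R} (p q r : R)
    (hn : n ⬝ᵥ n = 1) (hnt : n ⬝ᵥ t = 0) : n ⬝ᵥ (frameTensor p q r n t *ᵥ n) = p := by
  simp [frameTensor_mulVec_self p q r hn hnt, dotProduct_add, dotProduct_smul, hn, hnt]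

theorem frameTensor_mulVec_eq_of_rotation [Field R] {c s p q p' q' r' : R} {n t n' t' : ι → R}
    (hs : s ≠ 0) (hcs : s ^ 2 + c ^ 2 = 1)
    (hn : n ⬝ᵥ n = 1) (ht : t ⬝ᵥ t = 1) (hnt : n ⬝ᵥ t = 0)
    (h₁ : n' = c • n - s • t) (h₂ : n = c • n' + s • t')
    (hpq : c * p - s * q = c * p' + s * q') :
    frameTensor p q ((c * q + s * p' - c * q') / s) n t *ᵥ n' =
      frameTensor p' q' r' n' t' *ᵥ n' := by
  have ht' : t' = s • n + c • t := tangent_eq_of_rotation hs hcs h₁ h₂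
  have hnn' : n ⬝ᵥ n' = c := by
    simp [h₁, dotProduct_sub, dotProduct_smul, hn, hnt]
  have htn' : t ⬝ᵥ n' = -s := by
    simp [h₁, dotProduct_sub, dotProduct_smul, ht, dotProduct_comm t n, hnt]
  have hn' : n' ⬝ᵥ n' = 1 := by
    nth_rw 1 [h₁]
    simp only [sub_dotProduct, smul_dotProduct, hnn', htn', smul_eq_mul]
    linear_combination hcs
  have hnt' : n' ⬝ᵥ t' = 0 := by
    simp only [dotProduct_comm n', ht', add_dotProduct, smul_dotProduct, hnn', htn', smul_eq_mul]
    ring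
  rw [frameTensor_mulVec_self p' q' r' hn' hnt', frameTensor_mulVec, hnn', htn', ht', h₁]
  match_scalars
  · linear_combination hpq
  · field_simp
    ring

end FrameTensor

section OddPatch

variable {m : ℕ} [NeZero m]

theorem Fin.add_one_eq_zero_iff (j : Fin m) : j + 1 = 0 ↔ (j : ℕ) + 1 = m := by
  obtain ⟨k, rfl⟩ : ∃ k, m = k + 1 := ⟨m - 1, (Nat.succ_pred_eq_of_ne_zero (NeZero.ne m)).symm⟩
  rw [Fin.ext_iff, Fin.val_add_one, Fin.val_zero]
  split_ifs with h <;> rw [Fin.ext_iff, Fin.val_last] at h <;> simp [h]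

theorem Fin.val_add_one_of_ne_zero {j : Fin m} (h : j + 1 ≠ 0) :
    ((j + 1 : Fin m) : ℕ) = j + 1 := by
  rw [Ne, Fin.add_one_eq_zero_iff] at h
  rw [Fin.val_add, Fin.val_one', Nat.add_mod_mod, Nat.mod_eq_of_lt (by omega)]

def oddPatchNormalCoeff : Fin m → ℝ := Pi.single 0 1

def oddPatchTangentCoeff (α₁ α₂ : ℝ) (j : Fin m) : ℝ :=
  if j = 0 then α₁ else (-1) ^ ((j : ℕ) + 1) * α₂

theorem oddPatchTangentCoeff_add_succ (hmo : Odd m) {κ : Fin m → ℝ} {α₁ α₂ : ℝ}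
    (hα₁ : α₁ = (κ 0 - κ (-1)) / 2) (hα₂ : α₂ = (κ 0 + κ (-1)) / 2) (j : Fin m) :
    oddPatchTangentCoeff α₁ α₂ j + oddPatchTangentCoeff α₁ α₂ (j + 1) =
      (oddPatchNormalCoeff j - oddPatchNormalCoeff (j + 1)) * κ j := by
  by_cases hj : j = 0 <;> by_cases hj₁ : j + 1 = 0
  · subst hj
    have h : (-1 : Fin m) = 0 := by rw [neg_eq_zero, ← zero_add 1, hj₁]
    simp only [oddPatchTangentCoeff, hj₁, if_pos, h] at hα₁ ⊢
    simp [hα₁]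
  · subst hj
    have h := Fin.val_add_one_of_ne_zero hj₁
    rw [zero_add, Fin.val_zero] at h
    rw [zero_add] at hj₁ ⊢
    simp only [oddPatchTangentCoeff, oddPatchNormalCoeff, if_pos, if_neg hj₁, h,
      Pi.single_eq_same, Pi.single_eq_of_ne hj₁, hα₁, hα₂]
    ring
  · have h := (Fin.add_one_eq_zero_iff j).mp hj₁
    obtain rfl := eq_neg_of_add_eq_zero_left hj₁
    simp [oddPatchTangentCoeff, oddPatchNormalCoeff, hj, hj₁, h, hmo.neg_one_pow, hα₁, hα₂]
    ring
  · have h := Fin.val_add_one_of_ne_zero hj₁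
    simp [oddPatchTangentCoeff, oddPatchNormalCoeff, hj, hj₁, h, pow_succ]

end OddPatch

theorem stmt7_general (m : ℕ) [NeZero m] (hmo : Odd m)
    (θ : Fin m → ℝ) (hθ : ∀ j, θ j ∈ Set.Ioo 0 Real.pi)
    (n t : Fin m → Fin 3 → ℝ)
    (hn : ∀ j, n j ⬝ᵥ n j = 1) (htj : ∀ j, t j ⬝ᵥ t j = 1)
    (hnt : ∀ j, n j ⬝ᵥ t j = 0)
    (hrot1 : ∀ j, n (j + 1) = Real.cos (θ j) • n j - Real.sin (θ j) • t j)
    (hrot2 : ∀ j, n j = Real.cos (θ j) • n (j + 1) + Real.sin (θ j) • t (j + 1))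
    (α1 α2 : ℝ)
    (hα1 : α1 = (Real.cos (θ 0) / Real.sin (θ 0) - Real.cos (θ (-1)) / Real.sin (θ (-1))) / 2)
    (hα2 : α2 = (Real.cos (θ 0) / Real.sin (θ 0) + Real.cos (θ (-1)) / Real.sin (θ (-1))) / 2) :
    ∃ T : Fin m → Matrix (Fin 3) (Fin 3) ℝ,
      (∀ j, (T j).IsSymm) ∧
      (∀ j, T j *ᵥ n (j + 1) = T (j + 1) *ᵥ n (j + 1)) ∧
      T 0 *ᵥ n 0 = n 0 + α1 • t 0 ∧
      (∀ j : Fin m, j ≠ 0 → T j *ᵥ n j = ((-1 : ℝ) ^ ((j : ℕ) + 1) * α2) • t j) ∧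
      n 0 ⬝ᵥ (T 0 *ᵥ n 0) = 1 ∧
      (∀ j : Fin m, j ≠ 0 → n j ⬝ᵥ (T j *ᵥ n j) = 0) := by
  have hs j : Real.sin (θ j) ≠ 0 := (Real.sin_pos_of_pos_of_lt_pi (hθ j).1 (hθ j).2).ne'
  have hκ := oddPatchTangentCoeff_add_succ
    (κ := fun j => Real.cos (θ j) / Real.sin (θ j)) hmo hα1 hα2
  set p : Fin m → ℝ := oddPatchNormalCoeff
  set q : Fin m → ℝ := oddPatchTangentCoeff α1 α2
  have hpq j : Real.cos (θ j) * p j - Real.sin (θ j) * q j =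
      Real.cos (θ j) * p (j + 1) + Real.sin (θ j) * q (j + 1) := by
    have h := hκ j
    rw [mul_div, eq_div_iff (hs j)] at h
    linear_combination -h
  refine ⟨fun j => frameTensor (p j) (q j)
      ((Real.cos (θ j) * q j + Real.sin (θ j) * p (j + 1) - Real.cos (θ j) * q (j + 1)) /
        Real.sin (θ j)) (n j) (t j),
    fun j => frameTensor_isSymm .., fun j => frameTensor_mulVec_eq_of_rotation (hs j)
      (Real.sin_sq_add_cos_sq _) (hn j) (htj j) (hnt j) (hrot1 j) (hrot2 j) (hpq j),
    ?_, ?_, ?_, ?_⟩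
  · simp [frameTensor_mulVec_self _ _ _ (hn 0) (hnt 0), p, q, oddPatchNormalCoeff,
      oddPatchTangentCoeff]
  · intro j hj
    simp [frameTensor_mulVec_self _ _ _ (hn j) (hnt j), p, q, oddPatchNormalCoeff,
      oddPatchTangentCoeff, hj]
  · simp [dotProduct_frameTensor_mulVec_self _ _ _ (hn 0) (hnt 0), p, oddPatchNormalCoeff]
  · intro j hj
    simp [dotProduct_frameTensor_mulVec_self _ _ _ (hn j) (hnt j), p, oddPatchNormalCoeff, hj]

/-- Odd-parity construction: for an odd number `m ≥ 3` of sectors around an interior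
edge, there is a normal-continuous piecewise-constant symmetric tensor field `T` with
`n_1ᵀ T n_1 = 1`, `n_jᵀ T n_j = 0` for `j ≥ 2`, given explicitly by
`T n_1 = n_1 + α_1 t_1`, `T n_j = α_j t_j` with
`α_1 = (cot θ_1 - cot θ_m)/2`, `α_j = (-1)^j (cot θ_1 + cot θ_m)/2` for `j ≥ 2`. -/
theorem stmt7 (m : ℕ) [NeZero m] (hm : 3 ≤ m) (hmo : Odd m)
    (θ : Fin m → ℝ) (hθ : ∀ j, θ j ∈ Set.Ioo 0 Real.pi)
    (hsum : ∑ j, θ j = 2 * Real.pi)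
    (n t : Fin m → Fin 3 → ℝ)
    (hn : ∀ j, n j ⬝ᵥ n j = 1) (htj : ∀ j, t j ⬝ᵥ t j = 1)
    (hnt : ∀ j, n j ⬝ᵥ t j = 0)
    (hrot1 : ∀ j, n (j + 1) = Real.cos (θ j) • n j - Real.sin (θ j) • t j)
    (hrot2 : ∀ j, n j = Real.cos (θ j) • n (j + 1) + Real.sin (θ j) • t (j + 1))
    (α1 α2 : ℝ)
    (hα1 : α1 = (Real.cos (θ 0) / Real.sin (θ 0) - Real.cos (θ (-1)) / Real.sin (θ (-1))) / 2)
    (hα2 : α2 = (Real.cos (θ 0) / Real.sin (θ 0) + Real.cos (θ (-1)) / Real.sin (θ (-1))) / 2) :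
    ∃ T : Fin m → Matrix (Fin 3) (Fin 3) ℝ,
      (∀ j, (T j).IsSymm) ∧
      (∀ j, T j *ᵥ n (j + 1) = T (j + 1) *ᵥ n (j + 1)) ∧
      T 0 *ᵥ n 0 = n 0 + α1 • t 0 ∧
      (∀ j : Fin m, j ≠ 0 → T j *ᵥ n j = ((-1 : ℝ) ^ ((j : ℕ) + 1) * α2) • t j) ∧
      n 0 ⬝ᵥ (T 0 *ᵥ n 0) = 1 ∧
      (∀ j : Fin m, j ≠ 0 → n j ⬝ᵥ (T j *ᵥ n j) = 0) :=
  stmt7_general m hmo θ hθ n t hn htj hnt hrot1 hrot2 α1 α2 hα1 hα2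
end

section
/- Let m = 4 and θ_1, θ_2, θ_3, θ_4 ∈ (0, π) be dihedral angles around an interior (singular) edge with θ_1 + θ_2 = θ_2 + θ_3 = π (hence θ_1 = θ_3, θ_2 = θ_4, θ_1 + θ_4 = π). With face normals n_1, ..., n_4 and tangents t_1, ..., t_4 as in the patch setup, the piecewise-constant symmetric tensor field T defined by T n_1 = n_1 + cot(θ_1) t_1 and T n_j = 0 for j = 2, 3, 4 is normal-continuous across all four interior faces and satisfies n_1^T T n_1 = 1 and n_j^T T n_j = 0 for j = 2, 3, 4. -/
/-!
On the faces `F_1` and `F_4` the tensor is the rank-one `v vᵀ` with `v = n_1 + cot θ_1 t_1`, and it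
vanishes on `F_2`, `F_3`. Then `T n_1 = (v ⬝ n_1) v = v`, and normal continuity reduces to
`v ⬝ n_2 = v ⬝ n_4 = 0`. Writing `n = cos φ n_1 + sin φ t_1` gives `v ⬝ n = sin (θ_1 + φ) / sin θ_1`,
which vanishes for `n_2` (`φ = -θ_1`) and, by singularity (`θ_1 + θ_4 = π`), for `n_4` (`φ = π - θ_1`).
In Lean the faces are indexed from `0`, so `n_1` is `n 0`.
-/

open Matrix Real

theorem cross_dot_cross_self_eq_one {R : Type*} [CommRing R] {u w : Fin 3 → R}
    (hu : u ⬝ᵥ u = 1) (hw : w ⬝ᵥ w = 1) (huw : u ⬝ᵥ w = 0) : u ⨯₃ w ⬝ᵥ u ⨯₃ w = 1 := by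
  rw [cross_dot_cross, hu, hw, huw, dotProduct_comm, huw]
  ring

theorem cot_smul_add_dotProduct_rotation {ι : Type*} [Fintype ι] {u w : ι → ℝ}
    (hu : u ⬝ᵥ u = 1) (hw : w ⬝ᵥ w = 1) (huw : u ⬝ᵥ w = 0) {a : ℝ} (ha : sin a ≠ 0) (φ : ℝ) :
    (u + (cos a / sin a) • w) ⬝ᵥ (cos φ • u + sin φ • w) = sin (a + φ) / sin a := by
  simp only [dotProduct_add, add_dotProduct, dotProduct_smul, smul_dotProduct, smul_eq_mul,
    hu, hw, huw, dotProduct_comm w u]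
  rw [sin_add]
  field_simp
  ring

theorem exists_rankOne_tensorField {R : Type*} [CommRing R] {ι : Type*} [Fintype ι]
    (n : Fin 4 → ι → R) {v : ι → R}
    (h0 : v ⬝ᵥ n 0 = 1) (h1 : v ⬝ᵥ n 1 = 0) (h3 : v ⬝ᵥ n 3 = 0) :
    ∃ T : Fin 4 → Matrix ι ι R,
      (∀ j, (T j).IsSymm) ∧
      (∀ j, T j *ᵥ n (j + 1) = T (j + 1) *ᵥ n (j + 1)) ∧
      T 0 *ᵥ n 0 = v ∧
      (∀ j : Fin 4, j ≠ 0 → T j *ᵥ n j = 0) ∧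
      n 0 ⬝ᵥ (T 0 *ᵥ n 0) = 1 ∧
      (∀ j : Fin 4, j ≠ 0 → n j ⬝ᵥ (T j *ᵥ n j) = 0) := by
  have hv : ∀ x, vecMulVec v v *ᵥ x = (v ⬝ᵥ x) • v := fun x => by
    rw [vecMulVec_mulVec, op_smul_eq_smul]
  refine ⟨![vecMulVec v v, 0, 0, vecMulVec v v], ?_, ?_, ?_, ?_, ?_, ?_⟩
  · intro j
    fin_cases j <;> simp [IsSymm, transpose_vecMulVec]
  · intro j
    fin_cases j <;> simp [hv, h1, h3]
  · simp [hv, h0]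
  · intro j hj
    fin_cases j <;> simp_all
  · simp [hv, h0, dotProduct_comm (n 0) v]
  · intro j hj
    fin_cases j <;> simp_all

theorem stmt9_general (θ : Fin 4 → ℝ) (hθ : ∀ j, θ j ∈ Set.Ioo 0 Real.pi)
    (hsing2 : θ 1 + θ 2 = Real.pi)
    (hsum : θ 0 + θ 1 + θ 2 + θ 3 = 2 * Real.pi)
    (t : Fin 3 → ℝ) (htu : t ⬝ᵥ t = 1)
    (n : Fin 4 → Fin 3 → ℝ) (hn : ∀ j, n j ⬝ᵥ n j = 1) (hnt : ∀ j, n j ⬝ᵥ t = 0)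
    (tj : Fin 4 → Fin 3 → ℝ) (htj : ∀ j, tj j = crossProduct (n j) t)
    (hrot1 : ∀ j, n (j + 1) = Real.cos (θ j) • n j - Real.sin (θ j) • tj j)
    (hrot2 : ∀ j, n j = Real.cos (θ j) • n (j + 1) + Real.sin (θ j) • tj (j + 1)) :
    ∃ T : Fin 4 → Matrix (Fin 3) (Fin 3) ℝ,
      (∀ j, (T j).IsSymm) ∧
      (∀ j, T j *ᵥ n (j + 1) = T (j + 1) *ᵥ n (j + 1)) ∧
      T 0 *ᵥ n 0 = n 0 + (Real.cos (θ 0) / Real.sin (θ 0)) • tj 0 ∧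
      (∀ j : Fin 4, j ≠ 0 → T j *ᵥ n j = 0) ∧
      n 0 ⬝ᵥ (T 0 *ᵥ n 0) = 1 ∧
      (∀ j : Fin 4, j ≠ 0 → n j ⬝ᵥ (T j *ᵥ n j) = 0) := by
  have hsin : sin (θ 0) ≠ 0 := (sin_pos_of_pos_of_lt_pi (hθ 0).1 (hθ 0).2).ne'
  have hτ : tj 0 ⬝ᵥ tj 0 = 1 := htj 0 ▸ cross_dot_cross_self_eq_one (hn 0) htu (hnt 0)
  have hnτ : n 0 ⬝ᵥ tj 0 = 0 := htj 0 ▸ dot_self_cross (n 0) t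
  have hn1 : n 1 = cos (-θ 0) • n 0 + sin (-θ 0) • tj 0 := by
    simpa [sub_eq_add_neg] using hrot1 0
  have hn3 : n 3 = cos (π - θ 0) • n 0 + sin (π - θ 0) • tj 0 := by
    rw [show π - θ 0 = θ 3 by linarith]
    exact hrot2 3
  have hv := cot_smul_add_dotProduct_rotation (hn 0) hτ hnτ hsin
  apply exists_rankOne_tensorField
  · simpa [div_self hsin] using hv 0
  · simpa [hn1] using hv (-θ 0)
  · simpa [hn3] using hv (π - θ 0)

/-- Singular-edge construction (`m = 4`, `θ_1 + θ_2 = θ_2 + θ_3 = π`): the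
piecewise-constant symmetric tensor field `T` with `T n_1 = n_1 + cot(θ_1) t_1`
and `T n_j = 0` for `j = 2,3,4` is normal-continuous and has `n_1ᵀ T n_1 = 1`,
`n_jᵀ T n_j = 0` for `j = 2,3,4`. -/
theorem stmt9 (θ : Fin 4 → ℝ) (hθ : ∀ j, θ j ∈ Set.Ioo 0 Real.pi)
    (hsing1 : θ 0 + θ 1 = Real.pi) (hsing2 : θ 1 + θ 2 = Real.pi)
    (hsum : θ 0 + θ 1 + θ 2 + θ 3 = 2 * Real.pi)
    (t : Fin 3 → ℝ) (htu : t ⬝ᵥ t = 1)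
    (n : Fin 4 → Fin 3 → ℝ) (hn : ∀ j, n j ⬝ᵥ n j = 1) (hnt : ∀ j, n j ⬝ᵥ t = 0)
    (tj : Fin 4 → Fin 3 → ℝ) (htj : ∀ j, tj j = crossProduct (n j) t)
    (hrot1 : ∀ j, n (j + 1) = Real.cos (θ j) • n j - Real.sin (θ j) • tj j)
    (hrot2 : ∀ j, n j = Real.cos (θ j) • n (j + 1) + Real.sin (θ j) • tj (j + 1)) :
    ∃ T : Fin 4 → Matrix (Fin 3) (Fin 3) ℝ,
      (∀ j, (T j).IsSymm) ∧
      (∀ j, T j *ᵥ n (j + 1) = T (j + 1) *ᵥ n (j + 1)) ∧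
      T 0 *ᵥ n 0 = n 0 + (Real.cos (θ 0) / Real.sin (θ 0)) • tj 0 ∧
      (∀ j : Fin 4, j ≠ 0 → T j *ᵥ n j = 0) ∧
      n 0 ⬝ᵥ (T 0 *ᵥ n 0) = 1 ∧
      (∀ j : Fin 4, j ≠ 0 → n j ⬝ᵥ (T j *ᵥ n j) = 0) :=
  stmt9_general θ hθ hsing2 hsum t htu n hn hnt tj htj hrot1 hrot2
end

section
/- Moment cancellation: with barycentric coordinates λ_0,...,λ_3 on a tetrahedron and faces F_i = {λ_i = 0}, suppose δ_1 = λ_0 λ_1 (λ_0 - 1/3) T_1, δ_2 = λ_0 λ_2 (λ_0 - 1/3) T_2, δ_3 = λ_0 λ_3 (λ_0 - 1/3) T_3 for symmetric matrices T_1, T_2, T_3 with n_3^T T_2 n_3 ≠ 0 and n_1^T T_3 n_1 ≠ 0 (n_i the unit normal of F_i). Then with r = (n_3^T T_1 n_3)/(n_3^T T_2 n_3) and s = r (n_1^T T_2 n_1)/(n_1^T T_3 n_1), the combination δ = δ_1 - r δ_2 + s δ_3 satisfies ∫_{F_3} n_3^T δ n_3 · q dS = 0 and ∫_{F_1} n_1^T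 δ n_1 · q dS = 0 for all affine functions q on those faces, while ∫_{F_2} n_2^T δ n_2 · λ_0 dS = (n_2^T T_1 n_2 + s n_2^T T_3 n_2) |F_2| / 180. -/
/-!
Each face of the tetrahedron is the image of the reference triangle `{u, v ≥ 0, u + v ≤ 1}`
under an injective affine map. Pulling `μH[2]` back along such a map gives a translation
invariant measure that is finite on compacts, hence a multiple of Lebesgue measure, and the
multiple is `2 |F|`. On the reference triangle, where `λ₀ = 1 - u - v`, a direct computation
shows that the bubble `λ₀ λⱼ (λ₀ - 1/3)` is orthogonal to the two barycentric coordinates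
vanishing at `x₀`, so its moment against an affine `q` is `q(x₀) |F| / 180`. On `F_i` the bubble
`δ_i` vanishes, and `r`, `s` are chosen so that the coefficients of the two remaining bubbles
cancel on `F_3` and on `F_1`.
-/

open Matrix MeasureTheory
open Set
open scoped NNReal

def refTriangle : Set (ℝ × ℝ) := {z | 0 ≤ z.1 ∧ 0 ≤ z.2 ∧ z.1 + z.2 ≤ 1}

theorem convex_refTriangle : Convex ℝ refTriangle := by
  rintro p ⟨hp₁, hp₂, hp₃⟩ q ⟨hq₁, hq₂, hq₃⟩ a b ha hb hab
  simp only [refTriangle, mem_ofPred_eq, Prod.fst_add, Prod.snd_add, Prod.smul_fst,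
    Prod.smul_snd, smul_eq_mul]
  exact ⟨by positivity, by positivity, by nlinarith⟩

theorem convexHull_eq_refTriangle :
    convexHull ℝ {((0 : ℝ), (0 : ℝ)), (1, 0), (0, 1)} = refTriangle := by
  refine (convexHull_min ?_ convex_refTriangle).antisymm fun z ⟨hz₁, hz₂, hz₃⟩ => ?_
  · rintro p (rfl | rfl | rfl) <;> norm_num [refTriangle]
  · have h := (convex_convexHull ℝ {((0 : ℝ), (0 : ℝ)), (1, 0), (0, 1)}).sum_mem
      (t := Finset.univ) (w := ![1 - z.1 - z.2, z.1, z.2]) (z := ![(0, 0), (1, 0), (0, 1)])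
      (fun i _ => by fin_cases i <;> simp <;> linarith) (by simp [Fin.sum_univ_three]; ring)
      (fun i _ => subset_convexHull ℝ _ (by fin_cases i <;> simp))
    simpa [Fin.sum_univ_three] using h

theorem isCompact_refTriangle : IsCompact refTriangle := by
  rw [← convexHull_eq_refTriangle]
  exact (toFinite _).isCompact_convexHull ℝ

theorem measurableSet_refTriangle : MeasurableSet refTriangle :=
  isCompact_refTriangle.isClosed.measurableSet

theorem mk_mem_refTriangle_iff {u v : ℝ} :
    (u, v) ∈ refTriangle ↔ u ∈ Icc 0 1 ∧ v ∈ Icc 0 (1 - u) := by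
  simp only [refTriangle, mem_ofPred_eq, mem_Icc]
  constructor
  · rintro ⟨h₁, h₂, h₃⟩
    exact ⟨⟨h₁, by linarith⟩, h₂, by linarith⟩
  · rintro ⟨⟨h₁, -⟩, h₂, h₃⟩
    exact ⟨h₁, h₂, by linarith⟩

theorem setIntegral_refTriangle_eq_intervalIntegral {G : Type*} [NormedAddCommGroup G]
    [NormedSpace ℝ G] {g : ℝ × ℝ → G} (hg : IntegrableOn g refTriangle) :
    ∫ z in refTriangle, g z = ∫ u in (0 : ℝ)..1, ∫ v in (0 : ℝ)..(1 - u), g (u, v) := by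
  have hsection : ∀ u, ∫ v, refTriangle.indicator g (u, v) =
      (Icc 0 1).indicator (fun u => ∫ v in (0 : ℝ)..(1 - u), g (u, v)) u := by
    intro u
    by_cases hu : u ∈ Icc (0 : ℝ) 1
    · have hslice : (fun v => refTriangle.indicator g (u, v)) =
          (Icc 0 (1 - u)).indicator (fun v => g (u, v)) := by
        ext v
        by_cases hv : v ∈ Icc 0 (1 - u) <;> simp [hv, mk_mem_refTriangle_iff, hu]
      rw [indicator_of_mem hu, hslice, integral_indicator measurableSet_Icc,
        intervalIntegral.integral_of_le (by linarith [hu.2]), integral_Icc_eq_integral_Ioc]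
    · simp [mk_mem_refTriangle_iff, hu]
  rw [← integral_indicator measurableSet_refTriangle, Measure.volume_eq_prod,
    integral_prod _ ((integrable_indicator_iff measurableSet_refTriangle).2 hg)]
  simp_rw [hsection]
  rw [integral_indicator measurableSet_Icc, intervalIntegral.integral_of_le zero_le_one,
    integral_Icc_eq_integral_Ioc]

theorem volume_real_refTriangle : volume.real refTriangle = 1 / 2 := by
  have h := setIntegral_refTriangle_eq_intervalIntegral (g := fun _ => (1 : ℝ))
    (integrableOn_const isCompact_refTriangle.measure_lt_top.ne)
  rw [setIntegral_const, smul_eq_mul, mul_one] at h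
  simp only [h, intervalIntegral.integral_const, smul_eq_mul, mul_one, sub_zero,
    intervalIntegral.integral_comp_sub_left (fun x => x)]
  norm_num

theorem setIntegral_refTriangle_bubble_mul_affine (α β a b c : ℝ) :
    ∫ z in refTriangle, (1 - z.1 - z.2) * (1 - z.1 - z.2 - 1 / 3) * (α * z.1 + β * z.2) *
      (a + b * z.1 + c * z.2) = (α + β) * a / 360 := by
  rw [setIntegral_refTriangle_eq_intervalIntegral
    ((by fun_prop : Continuous _).continuousOn.integrableOn_compact isCompact_refTriangle)]
  -- `simp` does not unify `r * x` with `r * f x`, hence the instance with `f := id` below.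
  conv_lhs =>
    enter [1, u]
    ring_nf
    simp (disch := exact (Continuous.intervalIntegrable (by fun_prop) _ _)) only
      [intervalIntegral.integral_add, intervalIntegral.integral_const_mul,
        intervalIntegral.integral_mul_const, intervalIntegral.integral_const, integral_pow,
        integral_id, intervalIntegral.integral_const_mul _ (fun x : ℝ => x)]
    ring_nf
  simp (disch := exact (Continuous.intervalIntegrable (by fun_prop) _ _)) only
    [intervalIntegral.integral_add, intervalIntegral.integral_const_mul,
      intervalIntegral.integral_mul_const, intervalIntegral.integral_const, integral_pow,
      integral_id]
  norm_num
  ring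

theorem MeasurableEmbedding.setIntegral_image_eq_setIntegral_comap {α β G : Type*}
    [MeasurableSpace α] [MeasurableSpace β] [NormedAddCommGroup G] [NormedSpace ℝ G]
    {f : α → β} (hf : MeasurableEmbedding f) (μ : Measure β) (s : Set α) (g : β → G) :
    ∫ y in f '' s, g y ∂μ = ∫ x in s, g (f x) ∂(μ.comap f) := by
  rw [hf.restrict_comap, ← hf.integral_map, hf.map_comap,
    Measure.restrict_restrict hf.measurableSet_range, inter_eq_right.2 (image_subset_range f s)]

section Triangle

variable {E : Type*} [NormedAddCommGroup E] [NormedSpace ℝ E]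

noncomputable def triangleParam (y : Fin 3 → E) : (ℝ × ℝ) →ᵃ[ℝ] E :=
  ((LinearMap.toSpanSingleton ℝ E (y 1 - y 0)).coprod
    (LinearMap.toSpanSingleton ℝ E (y 2 - y 0))).toAffineMap + AffineMap.const ℝ _ (y 0)

theorem triangleParam_apply (y : Fin 3 → E) (z : ℝ × ℝ) :
    triangleParam y z = y 0 + z.1 • (y 1 - y 0) + z.2 • (y 2 - y 0) := by
  simp [triangleParam]
  abel

theorem AffineMap.apply_triangleParam {F : Type*} [AddCommGroup F] [Module ℝ F]
    (h : E →ᵃ[ℝ] F) (y : Fin 3 → E) (z : ℝ × ℝ) :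
    h (triangleParam y z) =
      h (y 0) + z.1 • (h (y 1) - h (y 0)) + z.2 • (h (y 2) - h (y 0)) := by
  rw [triangleParam_apply, add_assoc, add_comm, ← vadd_eq_add, h.map_vadd, map_add, map_smul,
    map_smul, ← vsub_eq_sub, ← vsub_eq_sub, h.linearMap_vsub, h.linearMap_vsub]
  simp only [vadd_eq_add, vsub_eq_sub]
  abel

theorem triangleParam_injective {y : Fin 3 → E} (hy : AffineIndependent ℝ y) :
    Function.Injective (triangleParam y) := by
  intro z z' h
  rw [triangleParam_apply, triangleParam_apply] at h
  have hw := hy.eq_of_sum_eq_sum (s := Finset.univ) (w₁ := ![1 - z.1 - z.2, z.1, z.2])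
    (w₂ := ![1 - z'.1 - z'.2, z'.1, z'.2]) (by simp [Fin.sum_univ_three]; ring) (by
      simp only [Fin.sum_univ_three, Matrix.cons_val_zero, Matrix.cons_val_one,
        Matrix.cons_val_two, Matrix.tail_cons, Matrix.head_cons]
      linear_combination (norm := module) h)
  exact Prod.ext (hw 1 (by simp)) (hw 2 (by simp))

theorem image_triangleParam_refTriangle (y : Fin 3 → E) :
    triangleParam y '' refTriangle = convexHull ℝ (range y) := by
  rw [← convexHull_eq_refTriangle, AffineMap.image_convexHull]
  congr 1
  ext p
  simp [triangleParam_apply, Fin.exists_fin_succ, eq_comm]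

theorem AffineMap.eq_zero_of_mem_convexHull {f : E →ᵃ[ℝ] ℝ} {s : Set E}
    (hf : ∀ p ∈ s, f p = 0) {p : E} (hp : p ∈ convexHull ℝ s) : f p = 0 :=
  convexHull_min hf ((convex_singleton 0).affine_preimage f) hp

variable [MeasurableSpace E] [BorelSpace E]

theorem AffineMap.exists_comap_hausdorffMeasure_eq_smul_volume (f : (ℝ × ℝ) →ᵃ[ℝ] E)
    (hf : Function.Injective f) : ∃ c : ℝ≥0, (μH[2] : Measure E).comap f = c • volume := by
  have hemb : MeasurableEmbedding f := f.continuous_of_finiteDimensional.measurableEmbedding hf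
  have : (μH[2].comap f).IsAddLeftInvariant := by
    refine ⟨fun t => Measure.ext fun A hA => ?_⟩
    have hshift : (fun z => f (-t + z)) = (fun p => -f.linear t + p) ∘ f := by
      funext z
      simp [← vadd_eq_add, f.map_vadd]
    rw [Measure.map_apply (measurable_const_add t) hA, hemb.comap_apply, hemb.comap_apply,
      ← Set.image_add_left', Set.image_image, hshift, Set.image_comp]
    exact (IsometryEquiv.addLeft (-f.linear t)).hausdorffMeasure_image 2 _
  have : IsFiniteMeasureOnCompacts (μH[2].comap f) := by
    refine ⟨fun K hK => ?_⟩
    obtain ⟨C, hC⟩ := f.lipschitzWith_of_finiteDimensional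
    rw [hemb.comap_apply]
    refine (hC.hausdorffMeasure_image_le zero_le_two K).trans_lt (ENNReal.mul_lt_top ?_ ?_)
    · exact ENNReal.rpow_lt_top_of_nonneg zero_le_two ENNReal.coe_ne_top
    · rw [hausdorffMeasure_prod_real]
      exact hK.measure_lt_top
  exact ⟨_, Measure.isAddLeftInvariant_eq_smul _ _⟩

theorem setIntegral_convexHull_eq_smul_setIntegral_refTriangle {G : Type*}
    [NormedAddCommGroup G] [NormedSpace ℝ G] {y : Fin 3 → E} (hy : AffineIndependent ℝ y)
    (g : E → G) :
    ∫ p in convexHull ℝ (range y), g p ∂μH[2] =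
      (2 * (μH[2] (convexHull ℝ (range y))).toReal) •
        ∫ z in refTriangle, g (triangleParam y z) := by
  have hemb : MeasurableEmbedding (triangleParam y) :=
    (triangleParam y).continuous_of_finiteDimensional.measurableEmbedding
      (triangleParam_injective hy)
  obtain ⟨c, hc⟩ := (triangleParam y).exists_comap_hausdorffMeasure_eq_smul_volume
    (triangleParam_injective hy)
  have hc' : 2 * (μH[2] (convexHull ℝ (range y))).toReal = c := by
    rw [← image_triangleParam_refTriangle, ← hemb.comap_apply, hc, Measure.smul_apply,
      ENNReal.toReal_smul, ← measureReal_def, volume_real_refTriangle, NNReal.smul_def,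
      smul_eq_mul]
    ring
  rw [← image_triangleParam_refTriangle, hemb.setIntegral_image_eq_setIntegral_comap, hc,
    Measure.restrict_smul, integral_smul_nnreal_measure, image_triangleParam_refTriangle, hc']
  rfl

theorem setIntegral_convexHull_bubble_mul_affine {y : Fin 3 → E} (hy : AffineIndependent ℝ y)
    {l : Fin 3 → E →ᵃ[ℝ] ℝ} (hl : ∀ i j, l i (y j) = if i = j then 1 else 0)
    (q : E →ᵃ[ℝ] ℝ) (α β : ℝ) :
    ∫ p in convexHull ℝ (range y),
        l 0 p * (l 0 p - 1 / 3) * (α * l 1 p + β * l 2 p) * q p ∂μH[2] =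
      (α + β) * q (y 0) * (μH[2] (convexHull ℝ (range y))).toReal / 180 := by
  rw [setIntegral_convexHull_eq_smul_setIntegral_refTriangle hy, smul_eq_mul]
  have hpull : ∀ z ∈ refTriangle,
      l 0 (triangleParam y z) * (l 0 (triangleParam y z) - 1 / 3) *
        (α * l 1 (triangleParam y z) + β * l 2 (triangleParam y z)) * q (triangleParam y z) =
      (1 - z.1 - z.2) * (1 - z.1 - z.2 - 1 / 3) * (α * z.1 + β * z.2) *
        (q (y 0) + (q (y 1) - q (y 0)) * z.1 + (q (y 2) - q (y 0)) * z.2) := by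
    intro z _
    rw [AffineMap.apply_triangleParam, AffineMap.apply_triangleParam,
      AffineMap.apply_triangleParam, AffineMap.apply_triangleParam]
    simp only [hl, Fin.isValue, Fin.reduceEq, ↓reduceIte, smul_eq_mul]
    ring
  rw [setIntegral_congr_fun measurableSet_refTriangle hpull,
    setIntegral_refTriangle_bubble_mul_affine]
  ring

theorem setIntegral_face_eq_of_eq_bubble_mul_affine {x : Fin 4 → E} (hx : AffineIndependent ℝ x)
    {lam : Fin 4 → E →ᵃ[ℝ] ℝ} (hlam : ∀ i j, lam i (x j) = if i = j then 1 else 0)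
    (i a b : Fin 4) (hi : i ≠ 0) (ha : i.succAbove 1 = a) (hb : i.succAbove 2 = b)
    (q : E →ᵃ[ℝ] ℝ) (α β : ℝ) {g : E → ℝ}
    (hg : ∀ p, lam i p = 0 →
      g p = lam 0 p * (lam 0 p - 1 / 3) * (α * lam a p + β * lam b p) * q p) :
    ∫ p in convexHull ℝ (x '' {j | j ≠ i}), g p ∂μH[2] =
      (α + β) * q (x 0) * (μH[2] (convexHull ℝ (x '' {j | j ≠ i}))).toReal / 180 := by
  subst ha hb
  have hvanish : ∀ p ∈ convexHull ℝ (x '' {j | j ≠ i}), lam i p = 0 := by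
    refine fun p => AffineMap.eq_zero_of_mem_convexHull ?_
    rintro _ ⟨j, hj, rfl⟩
    simp [hlam, Ne.symm hj]
  have hface : x '' {j | j ≠ i} = range (x ∘ i.succAbove) := by
    rw [range_comp, Fin.range_succAbove]
    rfl
  rw [setIntegral_congr_fun ((toFinite _).isCompact_convexHull ℝ).isClosed.measurableSet
    fun p hp => hg p (hvanish p hp), hface]
  simpa [Fin.succAbove_ne_zero_zero hi] using setIntegral_convexHull_bubble_mul_affine
    (hx.comp_embedding i.succAboveEmb) (l := lam ∘ i.succAbove) (fun a b => by simp [hlam])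
    q α β

end Triangle

theorem stmt19_general (x : Fin 4 → Fin 3 → ℝ) (hx : AffineIndependent ℝ x)
    (lam : Fin 4 → ((Fin 3 → ℝ) →ᵃ[ℝ] ℝ))
    (hlam : ∀ i j, lam i (x j) = if i = j then 1 else 0)
    (F : Fin 4 → Set (Fin 3 → ℝ))
    (hF : ∀ i, F i = convexHull ℝ (x '' {j | j ≠ i}))
    (nn : Fin 4 → Fin 3 → ℝ)
    (T1 T2 T3 : Matrix (Fin 3) (Fin 3) ℝ)
    (h2ne : nn 3 ⬝ᵥ (T2 *ᵥ nn 3) ≠ 0) (h3ne : nn 1 ⬝ᵥ (T3 *ᵥ nn 1) ≠ 0)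
    (r s : ℝ)
    (hr : r = (nn 3 ⬝ᵥ (T1 *ᵥ nn 3)) / (nn 3 ⬝ᵥ (T2 *ᵥ nn 3)))
    (hs : s = r * (nn 1 ⬝ᵥ (T2 *ᵥ nn 1)) / (nn 1 ⬝ᵥ (T3 *ᵥ nn 1)))
    (δ : (Fin 3 → ℝ) → Matrix (Fin 3) (Fin 3) ℝ)
    (hδ : ∀ p, δ p = (lam 0 p * lam 1 p * (lam 0 p - 1 / 3)) • T1
        - (r * (lam 0 p * lam 2 p * (lam 0 p - 1 / 3))) • T2
        + (s * (lam 0 p * lam 3 p * (lam 0 p - 1 / 3))) • T3) :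
    (∀ q : (Fin 3 → ℝ) →ᵃ[ℝ] ℝ,
        (∫ p in F 3, (nn 3 ⬝ᵥ (δ p *ᵥ nn 3)) * q p ∂μH[2]) = 0) ∧
    (∀ q : (Fin 3 → ℝ) →ᵃ[ℝ] ℝ,
        (∫ p in F 1, (nn 1 ⬝ᵥ (δ p *ᵥ nn 1)) * q p ∂μH[2]) = 0) ∧
    (∫ p in F 2, (nn 2 ⬝ᵥ (δ p *ᵥ nn 2)) * lam 0 p ∂μH[2])
      = (nn 2 ⬝ᵥ (T1 *ᵥ nn 2) + s * (nn 2 ⬝ᵥ (T3 *ᵥ nn 2))) * (μH[2] (F 2)).toReal / 180 := by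
  have hquad : ∀ w p, w ⬝ᵥ (δ p *ᵥ w) = lam 0 p * (lam 0 p - 1 / 3) *
      (lam 1 p * (w ⬝ᵥ (T1 *ᵥ w)) - r * lam 2 p * (w ⬝ᵥ (T2 *ᵥ w)) +
        s * lam 3 p * (w ⬝ᵥ (T3 *ᵥ w))) := by
    intro w p
    simp only [hδ, add_mulVec, sub_mulVec, smul_mulVec, dotProduct_add, dotProduct_sub,
      dotProduct_smul, smul_eq_mul]
    ring
  refine ⟨fun q => ?_, fun q => ?_, ?_⟩
  · rw [hF, setIntegral_face_eq_of_eq_bubble_mul_affine hx hlam 3 1 2 (by decide) rfl rfl q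
      (nn 3 ⬝ᵥ (T1 *ᵥ nn 3)) (-(r * (nn 3 ⬝ᵥ (T2 *ᵥ nn 3))))
      fun p hp => by rw [hquad, hp]; ring, hr, div_mul_cancel₀ _ h2ne]
    ring
  · rw [hF, setIntegral_face_eq_of_eq_bubble_mul_affine hx hlam 1 2 3 (by decide) rfl rfl q
      (-(r * (nn 1 ⬝ᵥ (T2 *ᵥ nn 1)))) (s * (nn 1 ⬝ᵥ (T3 *ᵥ nn 1)))
      fun p hp => by rw [hquad, hp]; ring, hs, div_mul_cancel₀ _ h3ne]
    ring
  · rw [hF, setIntegral_face_eq_of_eq_bubble_mul_affine hx hlam 2 1 3 (by decide) rfl rfl (lam 0)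
      (nn 2 ⬝ᵥ (T1 *ᵥ nn 2)) (s * (nn 2 ⬝ᵥ (T3 *ᵥ nn 2)))
      fun p hp => by rw [hquad, hp]; ring, hlam, ← hF]
    simp

/-- Moment cancellation: the combination `δ = δ_1 - r δ_2 + s δ_3` of matrix-valued
cubic bubbles has vanishing `P_1` normal-normal moments on the faces `F_3` and `F_1`,
while its `λ_0`-moment on `F_2` equals
`(n_2ᵀT_1n_2 + s·n_2ᵀT_3n_2)·|F_2|/180`. -/
theorem stmt19 (x : Fin 4 → Fin 3 → ℝ) (hx : AffineIndependent ℝ x)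
    (lam : Fin 4 → ((Fin 3 → ℝ) →ᵃ[ℝ] ℝ))
    (hlam : ∀ i j, lam i (x j) = if i = j then 1 else 0)
    (F : Fin 4 → Set (Fin 3 → ℝ))
    (hF : ∀ i, F i = convexHull ℝ (x '' {j | j ≠ i}))
    (nn : Fin 4 → Fin 3 → ℝ)
    (hnn : ∀ i, nn i ⬝ᵥ nn i = 1)
    (hperp : ∀ i j k : Fin 4, j ≠ i → k ≠ i → nn i ⬝ᵥ (x j - x k) = 0)
    (T1 T2 T3 : Matrix (Fin 3) (Fin 3) ℝ)
    (hT1 : T1.IsSymm) (hT2 : T2.IsSymm) (hT3 : T3.IsSymm)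
    (h2ne : nn 3 ⬝ᵥ (T2 *ᵥ nn 3) ≠ 0) (h3ne : nn 1 ⬝ᵥ (T3 *ᵥ nn 1) ≠ 0)
    (r s : ℝ)
    (hr : r = (nn 3 ⬝ᵥ (T1 *ᵥ nn 3)) / (nn 3 ⬝ᵥ (T2 *ᵥ nn 3)))
    (hs : s = r * (nn 1 ⬝ᵥ (T2 *ᵥ nn 1)) / (nn 1 ⬝ᵥ (T3 *ᵥ nn 1)))
    (δ : (Fin 3 → ℝ) → Matrix (Fin 3) (Fin 3) ℝ)
    (hδ : ∀ p, δ p = (lam 0 p * lam 1 p * (lam 0 p - 1 / 3)) • T1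
        - (r * (lam 0 p * lam 2 p * (lam 0 p - 1 / 3))) • T2
        + (s * (lam 0 p * lam 3 p * (lam 0 p - 1 / 3))) • T3) :
    (∀ q : (Fin 3 → ℝ) →ᵃ[ℝ] ℝ,
        (∫ p in F 3, (nn 3 ⬝ᵥ (δ p *ᵥ nn 3)) * q p ∂μH[2]) = 0) ∧
    (∀ q : (Fin 3 → ℝ) →ᵃ[ℝ] ℝ,
        (∫ p in F 1, (nn 1 ⬝ᵥ (δ p *ᵥ nn 1)) * q p ∂μH[2]) = 0) ∧
    (∫ p in F 2, (nn 2 ⬝ᵥ (δ p *ᵥ nn 2)) * lam 0 p ∂μH[2])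
      = (nn 2 ⬝ᵥ (T1 *ᵥ nn 2) + s * (nn 2 ⬝ᵥ (T3 *ᵥ nn 2))) * (μH[2] (F 2)).toReal / 180 :=
  stmt19_general x hx lam hlam F hF nn T1 T2 T3 h2ne h3ne r s hr hs δ hδ
end
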